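/- Under hypotheses (2.5) and (2.6) with Δ ∈ (0,1/2], the set S_1 = {x ∈ F_p : φ(x) > (Δ/8)φ(0)} satisfies Δp/(2φ(0)) < |S_1| < 8p/(Δφ(0)), and S_2 := S_1 \ {0} satisfies |S_2| ≥ |S_1|/2. -/

import Mathlib

open Finset Complex
open scoped Classical BigOperators Pointwise

/-- The additive character `x ↦ e^{2πix/p}` on `ZMod p`. -/
noncomputable def ePsi (p : ℕ) (x : ZMod p) : ℂ :=
  Complex.exp (2 * Real.pi * Complex.I * (x.val : ℂ) / (p : ℂ))

/-- Fourier transform of a (real) measure on `ZMod p`. -/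
noncomputable def ft (p : ℕ) [NeZero p] (μ : ZMod p → ℝ) (ξ : ZMod p) : ℂ :=
  ∑ x : ZMod p, (μ x : ℂ) * ePsi p (x * ξ)

/-- Convolution of two functions on `ZMod p`. -/
noncomputable def cnv (p : ℕ) [NeZero p] (f g : ZMod p → ℝ) (x : ZMod p) : ℝ :=
  ∑ y : ZMod p, f y * g (x - y)

/-- `φ(x) = p · (μ ∗ μ⁻)(x)`. -/
noncomputable def phiF (p : ℕ) [NeZero p] (μ : ZMod p → ℝ) (x : ZMod p) : ℝ :=
  (p : ℝ) * cnv p μ (fun y => μ (-y)) x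

/-- `k`-fold convolution of `f` (0-fold is the Dirac mass at 0). -/
noncomputable def convIter (p : ℕ) [NeZero p] (f : ZMod p → ℝ) : ℕ → ZMod p → ℝ
  | 0 => fun x => if x = 0 then 1 else 0
  | n + 1 => cnv p f (convIter p f n)

/-- `ν_k`, the `k`-fold convolution of `ν = μ ∗ μ⁻`. -/
noncomputable def nuk (p : ℕ) [NeZero p] (μ : ZMod p → ℝ) (k : ℕ) : ZMod p → ℝ :=
  convIter p (cnv p μ (fun y => μ (-y))) k

/-- `Λ_δ`, the set of large Fourier coefficients. -/
noncomputable def Lam (p : ℕ) [NeZero p] (μ : ZMod p → ℝ) (δ : ℝ) : Finset (ZMod p) :=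
  Finset.univ.filter (fun ξ => (p : ℝ) ^ (-δ) < ‖ft p μ ξ‖)

/-! With `ν = μ ∗ μ⁻` one has `ν̂ = |μ̂|²`, so Parseval gives `∑ |μ̂|² = φ(0)` and
`∑ φ² = p ∑ |μ̂|⁴`. In (2.5) the dilate `y = 0` contributes `μ(0) ∑ |μ̂|²` and, by Cauchy–Schwarz,
every dilate `y ≠ 0` contributes at most `∑ |μ̂|⁴`; as `μ(0) < Δ/4` this gives
`∑ |μ̂|⁴ > (3/4) Δ φ(0)`. Since `0 ≤ φ ≤ φ(0)` and `∑ φ = p`, the points with `φ ≤ (Δ/8) φ(0)`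
carry at most `(Δ/8) φ(0) p` of `∑ φ²`, forcing `|S₁| φ(0)² > (5/8) Δ p φ(0)`; the upper bound
is Markov's inequality. Finally `φ(0) = p ∑ μ² < pΔ/4` makes `|S₁| > 2`, so removing `0` at most
halves `S₁`. -/

lemma sum_mul_comp_le_sum_sq {α : Type*} [Fintype α] (f : α → ℝ) (e : α ≃ α) :
    ∑ x, f x * f (e x) ≤ ∑ x, f x ^ 2 := by
  calc ∑ x, f x * f (e x) ≤ ∑ x, (f x ^ 2 + f (e x) ^ 2) / 2 :=
        Finset.sum_le_sum fun x _ => by nlinarith [sq_nonneg (f x - f (e x))]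
    _ = ∑ x, f x ^ 2 := by
        rw [← Finset.sum_div, Finset.sum_add_distrib, e.sum_comp (fun x => f x ^ 2)]
        ring

lemma sum_sq_le_card_filter_mul_sq_add {α : Type*} [Fintype α] {f : α → ℝ} {M t : ℝ}
    (hf : ∀ x, 0 ≤ f x) (hM : ∀ x, f x ≤ M) (ht : 0 ≤ t) :
    ∑ x, f x ^ 2 ≤ #{x | t < f x} * M ^ 2 + t * ∑ x, f x := by
  have pointwise (x : α) : f x ^ 2 ≤ (if t < f x then M ^ 2 else 0) + t * f x := by
    split_ifs with hx
    · nlinarith [hf x, hM x]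
    · nlinarith [hf x]
  calc ∑ x, f x ^ 2 ≤ ∑ x, ((if t < f x then M ^ 2 else 0) + t * f x) :=
        Finset.sum_le_sum fun x _ => pointwise x
    _ = _ := by
        rw [Finset.sum_add_distrib, ← Finset.sum_filter, Finset.sum_const, nsmul_eq_mul,
          Finset.mul_sum]

lemma card_filter_mul_lt_sum {α : Type*} [Fintype α] {f : α → ℝ} {t : ℝ}
    (hf : ∀ x, 0 ≤ f x) (hne : (Finset.univ.filter fun x => t < f x).Nonempty) :
    #{x | t < f x} * t < ∑ x, f x := by
  calc #{x | t < f x} * t = ∑ _x ∈ Finset.univ.filter (fun x => t < f x), t := by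
        rw [Finset.sum_const, nsmul_eq_mul]
    _ < ∑ x ∈ Finset.univ.filter (fun x => t < f x), f x :=
        Finset.sum_lt_sum_of_nonempty hne fun x hx => (Finset.mem_filter.mp hx).2
    _ ≤ ∑ x, f x := Finset.sum_le_sum_of_subset_of_nonneg (Finset.filter_subset _ _)
        fun x _ _ => hf x

section Fourier
variable {p : ℕ} [NeZero p]

lemma ePsi_eq_stdAddChar (x : ZMod p) : ePsi p x = ZMod.stdAddChar x := by
  rw [ZMod.stdAddChar_apply, ZMod.toCircle_apply]; rfl

lemma ft_cnv (f g : ZMod p → ℝ) (ξ : ZMod p) :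
    ft p (cnv p f g) ξ = ft p f ξ * ft p g ξ := by
  rw [ft, ft, ft, Finset.sum_mul_sum]
  simp only [cnv, Complex.ofReal_sum, Complex.ofReal_mul, Finset.sum_mul]
  rw [Finset.sum_comm]
  refine Finset.sum_congr rfl fun y _ =>
    (Fintype.sum_equiv (Equiv.addRight y) _ _ fun z => ?_).symm
  simp only [Equiv.coe_addRight, add_sub_cancel_right, add_mul, ePsi_eq_stdAddChar,
    AddChar.map_add_eq_mul]
  ring

lemma ft_reflect (f : ZMod p → ℝ) (ξ : ZMod p) :
    ft p (fun y => f (-y)) ξ = starRingEnd ℂ (ft p f ξ) := by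
  simp only [ft, map_sum, map_mul, Complex.conj_ofReal]
  refine Fintype.sum_equiv (Equiv.neg (ZMod p)) _ _ fun x => ?_
  simp only [Equiv.neg_apply, neg_mul, ePsi_eq_stdAddChar, AddChar.map_neg_eq_conj,
    Complex.conj_conj]

lemma ft_cnv_reflect (f : ZMod p → ℝ) (ξ : ZMod p) :
    ft p (cnv p f (fun y => f (-y))) ξ = (‖ft p f ξ‖ ^ 2 : ℝ) := by
  rw [ft_cnv, ft_reflect, Complex.mul_conj, Complex.normSq_eq_norm_sq]

lemma sum_ft (f : ZMod p → ℝ) : ∑ ξ : ZMod p, ft p f ξ = p * f 0 := by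
  simp only [ft, ePsi_eq_stdAddChar]
  rw [Finset.sum_comm]
  have orthogonality (x : ZMod p) :
      ∑ ξ : ZMod p, ZMod.stdAddChar (x * ξ) = if x = 0 then (p : ℂ) else 0 := by
    simp_rw [mul_comm x]
    simpa using AddChar.sum_mulShift x (ZMod.isPrimitive_stdAddChar p)
  simp [← Finset.mul_sum, orthogonality, mul_comm]

lemma cnv_reflect_apply (f : ZMod p → ℝ) (x : ZMod p) :
    cnv p f (fun y => f (-y)) x = ∑ y : ZMod p, f y * f (y - x) := by
  simp only [cnv, neg_sub]

lemma sum_norm_ft_sq (f : ZMod p → ℝ) :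
    ∑ ξ : ZMod p, ‖ft p f ξ‖ ^ 2 = p * ∑ x : ZMod p, f x ^ 2 := by
  have h := sum_ft (cnv p f fun y => f (-y))
  simp only [ft_cnv_reflect, cnv_reflect_apply, sub_zero, ← sq] at h
  exact_mod_cast h

lemma ft_zero (f : ZMod p → ℝ) : ft p f 0 = ∑ x : ZMod p, f x := by
  simp [ft, ePsi_eq_stdAddChar]

end Fourier

section Autocorrelation
variable {p : ℕ} [NeZero p]

lemma sum_cnv (f g : ZMod p → ℝ) :
    ∑ x : ZMod p, cnv p f g x = (∑ x : ZMod p, f x) * ∑ x : ZMod p, g x := by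
  simp only [cnv]
  rw [Finset.sum_comm, Finset.sum_mul]
  refine Finset.sum_congr rfl fun y _ => ?_
  rw [← Finset.mul_sum]
  exact congrArg _ (Fintype.sum_equiv (Equiv.subRight y) _ _ fun _ => rfl)

lemma phiF_nonneg {μ : ZMod p → ℝ} (hpos : ∀ x, 0 ≤ μ x) (x : ZMod p) : 0 ≤ phiF p μ x :=
  mul_nonneg (Nat.cast_nonneg p) (Finset.sum_nonneg fun y _ => mul_nonneg (hpos y) (hpos _))

lemma phiF_zero (μ : ZMod p → ℝ) : phiF p μ 0 = p * ∑ x : ZMod p, μ x ^ 2 := by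
  simp only [phiF, cnv_reflect_apply, sub_zero, sq]

lemma phiF_le_phiF_zero (μ : ZMod p → ℝ) (x : ZMod p) : phiF p μ x ≤ phiF p μ 0 := by
  rw [phiF, cnv_reflect_apply, phiF_zero]
  exact mul_le_mul_of_nonneg_left (sum_mul_comp_le_sum_sq μ (Equiv.subRight x))
    (Nat.cast_nonneg p)

lemma sum_phiF {μ : ZMod p → ℝ} (hsum : ∑ x : ZMod p, μ x = 1) :
    ∑ x : ZMod p, phiF p μ x = p := by
  have hrefl : ∑ x : ZMod p, μ (-x) = 1 :=
    (Fintype.sum_equiv (Equiv.neg _) _ _ fun _ => rfl).trans hsum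
  simp only [phiF, ← Finset.mul_sum, sum_cnv, hsum, hrefl, mul_one]

lemma one_le_phiF_zero {μ : ZMod p → ℝ} (hsum : ∑ x : ZMod p, μ x = 1) : 1 ≤ phiF p μ 0 := by
  have h := Finset.sum_le_sum fun x (_ : x ∈ Finset.univ) => phiF_le_phiF_zero μ x
  rw [sum_phiF hsum, Finset.sum_const, Finset.card_univ, ZMod.card, nsmul_eq_mul] at h
  have hp : (0 : ℝ) < p := Nat.cast_pos.mpr (NeZero.pos p)
  nlinarith

lemma sum_phiF_sq (μ : ZMod p → ℝ) :
    ∑ x : ZMod p, phiF p μ x ^ 2 = p * ∑ ξ : ZMod p, ‖ft p μ ξ‖ ^ 4 := by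
  have h := sum_norm_ft_sq (cnv p μ fun y => μ (-y))
  simp only [ft_cnv_reflect, Complex.norm_real, Real.norm_eq_abs, sq_abs, ← pow_mul] at h
  simp only [phiF, mul_pow, ← Finset.mul_sum, h]
  ring

end Autocorrelation

section Energy
variable {p : ℕ} [Fact p.Prime]

lemma sum_norm_ft_sq_mul_dilate_le (f : ZMod p → ℝ) {y : ZMod p} (hy : y ≠ 0) :
    ∑ ξ : ZMod p, ‖ft p f ξ‖ ^ 2 * ‖ft p f (y * ξ)‖ ^ 2 ≤ ∑ ξ : ZMod p, ‖ft p f ξ‖ ^ 4 := by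
  refine (sum_mul_comp_le_sum_sq (fun ξ => ‖ft p f ξ‖ ^ 2) (Equiv.mulLeft₀ y hy)).trans_eq ?_
  simp only [← pow_mul]

lemma sum_sum_norm_ft_sq_mul_dilate_le {μ : ZMod p → ℝ} (hpos : ∀ x, 0 ≤ μ x)
    (hsum : ∑ x : ZMod p, μ x = 1) :
    ∑ ξ : ZMod p, ∑ y : ZMod p, ‖ft p μ ξ‖ ^ 2 * ‖ft p μ (y * ξ)‖ ^ 2 * μ y
      ≤ μ 0 * ∑ ξ : ZMod p, ‖ft p μ ξ‖ ^ 2 + ∑ ξ : ZMod p, ‖ft p μ ξ‖ ^ 4 := by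
  set T := ∑ ξ : ZMod p, ‖ft p μ ξ‖ ^ 2
  set Q := ∑ ξ : ZMod p, ‖ft p μ ξ‖ ^ 4
  have hQ : 0 ≤ Q := Finset.sum_nonneg fun _ _ => by positivity
  have term_le (y : ZMod p) :
      ∑ ξ : ZMod p, ‖ft p μ ξ‖ ^ 2 * ‖ft p μ (y * ξ)‖ ^ 2 * μ y
        ≤ (if y = 0 then μ 0 * T else 0) + μ y * Q := by
    rw [← Finset.sum_mul, mul_comm]
    by_cases hy : y = 0
    · subst hy
      simp only [zero_mul, ft_zero, hsum, Complex.ofReal_one, norm_one, one_pow, mul_one,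
        if_true]
      exact le_add_of_nonneg_right (mul_nonneg (hpos 0) hQ)
    · rw [if_neg hy, zero_add]
      exact mul_le_mul_of_nonneg_left (sum_norm_ft_sq_mul_dilate_le μ hy) (hpos y)
  calc _ = ∑ y : ZMod p, ∑ ξ : ZMod p, ‖ft p μ ξ‖ ^ 2 * ‖ft p μ (y * ξ)‖ ^ 2 * μ y :=
        Finset.sum_comm
    _ ≤ ∑ y : ZMod p, ((if y = 0 then μ 0 * T else 0) + μ y * Q) :=
        Finset.sum_le_sum fun y _ => term_le y
    _ = μ 0 * T + Q := by
        rw [Finset.sum_add_distrib, Finset.sum_ite_eq', ← Finset.sum_mul, hsum, one_mul]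
        simp

end Energy

theorem stmt4_general (p : ℕ) [Fact p.Prime] (μ : ZMod p → ℝ)
    (hpos : ∀ x, 0 ≤ μ x) (hsum : ∑ x : ZMod p, μ x = 1)
    (Δ : ℝ) (hΔ0 : 0 < Δ)
    (h25 : ∑ ξ : ZMod p, ∑ y : ZMod p,
        ‖ft p μ ξ‖ ^ 2 * ‖ft p μ (y * ξ)‖ ^ 2 * μ y
      > Δ * ∑ ξ : ZMod p, ‖ft p μ ξ‖ ^ 2)
    (h26a : μ 0 < Δ / 4) (h26b : ∑ x : ZMod p, (μ x) ^ 2 < Δ / 4)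
    (S1 S2 : Finset (ZMod p))
    (hS1 : S1 = Finset.univ.filter (fun x => Δ / 8 * phiF p μ 0 < phiF p μ x))
    (hS2 : S2 = S1.erase 0) :
    Δ * p / (2 * phiF p μ 0) < (S1.card : ℝ) ∧
    (S1.card : ℝ) < 8 * p / (Δ * phiF p μ 0) ∧
    (S1.card : ℝ) / 2 ≤ (S2.card : ℝ) := by
  set φ₀ := phiF p μ 0 with hφ₀_def
  set Q := ∑ ξ : ZMod p, ‖ft p μ ξ‖ ^ 4
  have hp : (0 : ℝ) < p := Nat.cast_pos.mpr (Fact.out : p.Prime).pos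
  have hφ₀ : 0 < φ₀ := one_pos.trans_le (one_le_phiF_zero hsum)
  have hφ₀_lt : φ₀ < p * (Δ / 4) := by
    rw [hφ₀_def, phiF_zero]; exact mul_lt_mul_of_pos_left h26b hp
  have hQ : 3 / 4 * Δ * φ₀ < Q := by
    have h := (sum_sum_norm_ft_sq_mul_dilate_le hpos hsum).trans_lt' h25
    rw [sum_norm_ft_sq, ← phiF_zero] at h
    nlinarith [mul_lt_mul_of_pos_right h26a hφ₀]
  have hsq := sum_sq_le_card_filter_mul_sq_add (phiF_nonneg hpos) (phiF_le_phiF_zero μ)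
    (by positivity : 0 ≤ Δ / 8 * φ₀)
  rw [sum_phiF_sq, sum_phiF hsum, ← hS1] at hsq
  have hlower : Δ * p / (2 * φ₀) < S1.card := by
    rw [div_lt_iff₀ (by positivity)]
    nlinarith [mul_lt_mul_of_pos_left hQ hp]
  have hcard : 2 < S1.card := by
    have : (2 : ℝ) < Δ * p / (2 * φ₀) := by
      rw [lt_div_iff₀ (by positivity)]; linarith
    exact_mod_cast this.trans hlower
  refine ⟨hlower, ?_, ?_⟩
  · have h := card_filter_mul_lt_sum (phiF_nonneg hpos) (t := Δ / 8 * φ₀)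
      (hS1 ▸ Finset.card_pos.mp (by omega))
    rw [sum_phiF hsum, ← hS1] at h
    rw [lt_div_iff₀ (by positivity)]
    linarith
  · have h := hS2 ▸ Finset.pred_card_le_card_erase (s := S1) (a := 0)
    rw [div_le_iff₀ two_pos]
    exact_mod_cast (by omega : S1.card ≤ S2.card * 2)

theorem stmt4 (p : ℕ) [Fact p.Prime] (μ : ZMod p → ℝ)
    (hpos : ∀ x, 0 ≤ μ x) (hsum : ∑ x : ZMod p, μ x = 1)
    (Δ : ℝ) (hΔ0 : 0 < Δ) (hΔ1 : Δ ≤ 1 / 2)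
    (h25 : ∑ ξ : ZMod p, ∑ y : ZMod p,
        ‖ft p μ ξ‖ ^ 2 * ‖ft p μ (y * ξ)‖ ^ 2 * μ y
      > Δ * ∑ ξ : ZMod p, ‖ft p μ ξ‖ ^ 2)
    (h26a : μ 0 < Δ / 4) (h26b : ∑ x : ZMod p, (μ x) ^ 2 < Δ / 4)
    (S1 S2 : Finset (ZMod p))
    (hS1 : S1 = Finset.univ.filter (fun x => Δ / 8 * phiF p μ 0 < phiF p μ x))
    (hS2 : S2 = S1.erase 0) :
    Δ * p / (2 * phiF p μ 0) < (S1.card : ℝ) ∧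
    (S1.card : ℝ) < 8 * p / (Δ * phiF p μ 0) ∧
    (S1.card : ℝ) / 2 ≤ (S2.card : ℝ) :=
  stmt4_general p μ hpos hsum Δ hΔ0 h25 h26a h26b S1 S2 hS1 hS2
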